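/- Let f ∈ L²(ℝ) satisfy f(s) = f(−1/s) for almost every s ≠ 0, and let f̃(κ) = f(z₊(κ)) with z₊(κ) = (κ + √(κ² + 4))/2. Then for every z₀ ∈ ℂ with Im z₀ ≠ 0, both integrals below converge absolutely and ∫_ℝ f(s)/(s − z₀) ds = ∫_ℝ f̃(κ)/(κ − (z₀ − 1/z₀)) dκ. (This rests on the pointwise kernel identity: for real s ≠ 0 and z ∈ ℂ \ ℝ, 1/(s − z) + (1/s²) · 1/((−1/s) − z) = (1 + 1/s²)/((s − 1/s) − (z − 1/z)).) -/

import Mathlib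

/-!
Split `ℝ` at `0`. On `(-∞, 0)` substitute `s = -1/x` with `x > 0`. By the symmetry of `f`, the
integral of `f(s)/(s - z₀)` becomes `∫_{x>0} f(x) (1/(x - z₀) + x⁻² /(-1/x - z₀)) dx`. By the kernel
identity, this integrand is `(1 + x⁻²) f(x) / ((x - 1/x) - (z₀ - 1/z₀))`. Since `x - 1/x` maps
`(0, ∞)` onto `ℝ` with derivative `1 + x⁻²` and inverse `z₊`, this last integral is the right-hand side.
Absolute convergence on the left is Cauchy–Schwarz, because `1/(s - z₀)` is in `L²`; on the right it
follows from the same identity, since both substitutions preserve integrability.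
-/

open MeasureTheory Filter Set
open scoped Topology ENNReal

noncomputable section

/-- `z₊(κ) = (κ + √(κ² + 4))/2`, the positive solution of `s - 1/s = κ`. -/
def zplus (k : ℝ) : ℝ := (k + Real.sqrt (k ^ 2 + 4)) / 2

lemma zplus_pos (k : ℝ) : 0 < zplus k := by
  have h : |k| < Real.sqrt (k ^ 2 + 4) := by
    rw [← Real.sqrt_sq_eq_abs]
    exact Real.sqrt_lt_sqrt (sq_nonneg k) (by linarith)
  unfold zplus
  linarith [(abs_lt.1 h).1]

lemma zplus_sub_inv_zplus (k : ℝ) : zplus k - (zplus k)⁻¹ = k := by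
  have hs : Real.sqrt (k ^ 2 + 4) ^ 2 = k ^ 2 + 4 := Real.sq_sqrt (by positivity)
  have hne : zplus k ≠ 0 := (zplus_pos k).ne'
  field_simp
  unfold zplus at *
  nlinarith [hs]

lemma strictMonoOn_sub_inv : StrictMonoOn (fun s : ℝ => s - s⁻¹) (Ioi 0) := by
  intro a ha b _ hab
  have : b⁻¹ < a⁻¹ := inv_strictAnti₀ ha hab
  simp only
  linarith

lemma zplus_sub_inv {s : ℝ} (hs : 0 < s) : zplus (s - s⁻¹) = s :=
  strictMonoOn_sub_inv.injOn (zplus_pos _) hs (zplus_sub_inv_zplus _)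

lemma image_sub_inv_Ioi : (fun s : ℝ => s - s⁻¹) '' Ioi 0 = univ :=
  eq_univ_of_forall fun k => ⟨zplus k, zplus_pos k, zplus_sub_inv_zplus k⟩

lemma image_neg_inv_Ioi : (fun s : ℝ => -s⁻¹) '' Ioi 0 = Iio 0 := by
  ext u
  constructor
  · rintro ⟨s, hs, rfl⟩
    simpa using hs
  · intro hu
    exact ⟨-u⁻¹, by simpa using hu, by simp⟩

lemma hasDerivWithinAt_neg_inv {x : ℝ} (hx : 0 < x) :
    HasDerivWithinAt (fun s : ℝ => -s⁻¹) (x ^ 2)⁻¹ (Ioi 0) x := by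
  simpa using (hasDerivAt_inv hx.ne').fun_neg.hasDerivWithinAt

lemma hasDerivWithinAt_sub_inv {x : ℝ} (hx : 0 < x) :
    HasDerivWithinAt (fun s : ℝ => s - s⁻¹) (1 + (x ^ 2)⁻¹) (Ioi 0) x := by
  simpa [sub_neg_eq_add] using
    ((hasDerivAt_id x).fun_sub (hasDerivAt_inv hx.ne')).hasDerivWithinAt

lemma injOn_neg_inv : InjOn (fun s : ℝ => -s⁻¹) (Ioi 0) :=
  fun _ _ _ _ h => inv_injective (neg_inj.1 h)

section ChangeOfVariables

variable {E : Type*} [NormedAddCommGroup E] [NormedSpace ℝ E]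

lemma integrableOn_Iio_iff_neg_inv (g : ℝ → E) :
    IntegrableOn g (Iio 0) ↔ IntegrableOn (fun x => (x ^ 2)⁻¹ • g (-x⁻¹)) (Ioi 0) := by
  rw [← image_neg_inv_Ioi, integrableOn_image_iff_integrableOn_abs_deriv_smul measurableSet_Ioi
    (fun _ hx => hasDerivWithinAt_neg_inv hx) injOn_neg_inv]
  simp only [abs_inv, abs_pow, sq_abs]

lemma setIntegral_Iio_eq_neg_inv (g : ℝ → E) :
    ∫ s in Iio 0, g s = ∫ x in Ioi 0, (x ^ 2)⁻¹ • g (-x⁻¹) := by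
  rw [← image_neg_inv_Ioi, integral_image_eq_integral_abs_deriv_smul measurableSet_Ioi
    (fun _ hx => hasDerivWithinAt_neg_inv hx) injOn_neg_inv]
  simp only [abs_inv, abs_pow, sq_abs]

lemma integrable_iff_sub_inv (g : ℝ → E) :
    Integrable g ↔ IntegrableOn (fun x => (1 + (x ^ 2)⁻¹) • g (x - x⁻¹)) (Ioi 0) := by
  rw [← integrableOn_univ, ← image_sub_inv_Ioi,
    integrableOn_image_iff_integrableOn_abs_deriv_smul measurableSet_Ioi
      (fun _ hx => hasDerivWithinAt_sub_inv hx) strictMonoOn_sub_inv.injOn]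
  refine integrableOn_congr_fun (fun x _ => ?_) measurableSet_Ioi
  rw [abs_of_pos (by positivity)]

lemma integral_eq_sub_inv (g : ℝ → E) :
    ∫ κ, g κ = ∫ x in Ioi 0, (1 + (x ^ 2)⁻¹) • g (x - x⁻¹) := by
  rw [← setIntegral_univ, ← image_sub_inv_Ioi,
    integral_image_eq_integral_abs_deriv_smul measurableSet_Ioi
      (fun _ hx => hasDerivWithinAt_sub_inv hx) strictMonoOn_sub_inv.injOn]
  refine setIntegral_congr_fun measurableSet_Ioi (fun x _ => ?_)
  rw [abs_of_pos (by positivity)]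

end ChangeOfVariables

lemma inv_add_inv_sq_mul_inv_neg_inv_sub {K : Type*} [Field K] {s z : K} (hs : s ≠ 0)
    (hz : z ≠ 0) (h₁ : s - z ≠ 0) (h₂ : -s⁻¹ - z ≠ 0) :
    (s - z)⁻¹ + (s ^ 2)⁻¹ * (-s⁻¹ - z)⁻¹ = (1 + (s ^ 2)⁻¹) * ((s - s⁻¹) - (z - z⁻¹))⁻¹ := by
  have e₂ : -s⁻¹ - z = -(1 + s * z) / s := by
    field_simp
    ring
  have e₃ : (s - s⁻¹) - (z - z⁻¹) = (s - z) * (1 + s * z) / (s * z) := by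
    field_simp
    ring
  have ht : 1 + s * z ≠ 0 := by
    rintro ht
    simp [e₂, ht] at h₂
  rw [e₂, e₃]
  field_simp
  ring

lemma Complex.ofReal_sub_ne_zero {z : ℂ} (hz : z.im ≠ 0) (x : ℝ) : (x : ℂ) - z ≠ 0 := by
  intro h
  exact hz (by simpa using congrArg Complex.im h)

lemma integrable_inv_normSq_ofReal_sub {z : ℂ} (hz : z.im ≠ 0) :
    Integrable fun x : ℝ => (Complex.normSq (x - z))⁻¹ := by
  have hscaled : Integrable fun x : ℝ => (1 + ((x - z.re) / z.im) ^ 2)⁻¹ :=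
    (integrable_inv_one_add_sq.comp_div hz).comp_sub_right z.re
  refine (hscaled.const_mul (z.im ^ 2)⁻¹).congr (Eventually.of_forall fun x => ?_)
  simp only [Complex.normSq_apply, Complex.sub_re, Complex.ofReal_re, Complex.sub_im,
    Complex.ofReal_im, zero_sub, neg_mul_neg]
  field_simp
  ring

lemma memLp_two_inv_ofReal_sub {z : ℂ} (hz : z.im ≠ 0) :
    MemLp (fun s : ℝ => ((s : ℂ) - z)⁻¹) 2 volume := by
  have hcont : Continuous fun s : ℝ => ((s : ℂ) - z)⁻¹ :=
    (Complex.continuous_ofReal.sub continuous_const).inv₀ (Complex.ofReal_sub_ne_zero hz)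
  rw [memLp_two_iff_integrable_sq_norm hcont.aestronglyMeasurable]
  refine (integrable_inv_normSq_ofReal_sub hz).congr (Eventually.of_forall fun x => ?_)
  simp only [norm_inv, inv_pow, Complex.sq_norm]

lemma integrable_div_ofReal_sub {f : ℝ → ℂ} (hf : MemLp f 2 volume) {z : ℂ} (hz : z.im ≠ 0) :
    Integrable fun s : ℝ => f s / ((s : ℂ) - z) := by
  simpa only [div_eq_mul_inv, Pi.mul_def] using hf.integrable_mul (memLp_two_inv_ofReal_sub hz)

lemma sub_inv_pullback_eq {f : ℝ → ℂ} {z : ℂ} (hz : z.im ≠ 0) {x : ℝ} (hx : 0 < x)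
    (hfx : f (-x⁻¹) = f x) :
    (1 + (x ^ 2)⁻¹) • (f (zplus (x - x⁻¹)) / (((x - x⁻¹ : ℝ) : ℂ) - (z - 1 / z))) =
      f x / ((x : ℂ) - z) + (x ^ 2)⁻¹ • (f (-x⁻¹) / (((-x⁻¹ : ℝ) : ℂ) - z)) := by
  have hz0 : z ≠ 0 := by
    rintro rfl
    exact hz rfl
  have hkernel := inv_add_inv_sq_mul_inv_neg_inv_sub (Complex.ofReal_ne_zero.2 hx.ne') hz0
    (Complex.ofReal_sub_ne_zero hz x) (by exact_mod_cast Complex.ofReal_sub_ne_zero hz (-x⁻¹))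
  rw [zplus_sub_inv hx, hfx, Complex.real_smul, Complex.real_smul]
  push_cast
  rw [one_div]
  linear_combination (f x) * hkernel.symm

/-- For `f ∈ L²(ℝ)` with `f(s) = f(-1/s)` a.e. and `z₀ ∈ ℂ` with
`Im z₀ ≠ 0`, both Cauchy-type integrals converge absolutely and
`∫_ℝ f(s)/(s − z₀) ds = ∫_ℝ f(z₊(κ))/(κ − (z₀ − 1/z₀)) dκ`. -/
theorem cauchy_kernel_change_of_variables (f : ℝ → ℂ)
    (hf : MemLp f 2 (volume : Measure ℝ))
    (hsym : ∀ᵐ s : ℝ, s ≠ 0 → f s = f (-1 / s))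
    (z₀ : ℂ) (hz₀ : z₀.im ≠ 0) :
    Integrable (fun s : ℝ => f s / ((s : ℂ) - z₀)) ∧
    Integrable (fun κ : ℝ => f (zplus κ) / ((κ : ℂ) - (z₀ - 1 / z₀))) ∧
    (∫ s : ℝ, f s / ((s : ℂ) - z₀)) =
      ∫ κ : ℝ, f (zplus κ) / ((κ : ℂ) - (z₀ - 1 / z₀)) := by
  set F : ℝ → ℂ := fun s => f s / ((s : ℂ) - z₀)
  set G : ℝ → ℂ := fun κ => f (zplus κ) / ((κ : ℂ) - (z₀ - 1 / z₀))
  have hF : Integrable F := integrable_div_ofReal_sub hf hz₀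
  have hF₀ : IntegrableOn F (Ioi 0) := hF.integrableOn
  have hF₁ : IntegrableOn (fun x => (x ^ 2)⁻¹ • F (-x⁻¹)) (Ioi 0) :=
    (integrableOn_Iio_iff_neg_inv F).1 hF.integrableOn
  have hpull : (fun x => (1 + (x ^ 2)⁻¹) • G (x - x⁻¹)) =ᵐ[volume.restrict (Ioi 0)]
      fun x => F x + (x ^ 2)⁻¹ • F (-x⁻¹) := by
    filter_upwards [ae_restrict_of_ae hsym, ae_restrict_mem measurableSet_Ioi] with x hx hx₀
    refine sub_inv_pullback_eq hz₀ hx₀ ?_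
    rw [hx (ne_of_gt hx₀), neg_div, one_div]
  have hG : Integrable G :=
    (integrable_iff_sub_inv G).2 ((hF₀.add hF₁).congr hpull.symm)
  refine ⟨hF, hG, ?_⟩
  calc ∫ s, F s = (∫ s in Iio 0, F s) + ∫ s in Ici 0, F s := by
        rw [← compl_Iio, integral_add_compl measurableSet_Iio hF]
    _ = (∫ x in Ioi 0, (x ^ 2)⁻¹ • F (-x⁻¹)) + ∫ x in Ioi 0, F x := by
        rw [setIntegral_Iio_eq_neg_inv, setIntegral_congr_set Ioi_ae_eq_Ici.symm]
    _ = ∫ x in Ioi 0, (1 + (x ^ 2)⁻¹) • G (x - x⁻¹) := by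
        rw [add_comm, ← integral_add hF₀ hF₁, integral_congr_ae hpull]
    _ = ∫ κ, G κ := (integral_eq_sub_inv G).symm
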